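/- Let H be a simply connected combinatorial strata structure endowed with a datum (N, {P_J}) of nodal strata, and let B be a nodal separating block of N in H. If γ and γ′ are two 1-paths in H joining the same strata {i} and {j}, then κ_B(γ) − κ_B(γ′) is even. In particular, A_B(i) ∩ B_B(i) = ∅ for every i ∈ I. -/

import Mathlib

/-- A combinatorial strata structure with minimal set of indices the (finite) type `I`:
an open subset of `𝒫(I)` (i.e. a family closed under taking subsets) containing all
singletons. -/
def IsCSS {I : Type*} (H : Set (Finset I)) : Prop :=
  (∀ J ∈ H, ∀ J' : Finset I, J' ⊆ J → J' ∈ H) ∧ ∀ i : I, ({i} : Finset I) ∈ H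

/-- `level H k` is `H(k)`, the set of strata of `H` with exactly `k` elements. -/
def level {I : Type*} (H : Set (Finset I)) (k : ℕ) : Set (Finset I) :=
  {J ∈ H | J.card = k}

/-- A `k`-path in `H`: a nonempty sequence of strata of `H(k)` such that the union of
any two consecutive entries lies in `H(k+1)`. -/
def IsKPath {I : Type*} [DecidableEq I] (H : Set (Finset I)) (k : ℕ)
    (γ : List (Finset I)) : Prop :=
  γ ≠ [] ∧ (∀ J ∈ γ, J ∈ level H k) ∧
    γ.Chain' fun J J' => (J ∪ J') ∈ level H (k + 1)

/-- The path `γ` joins `J` and `J'`. -/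
def Joins {I : Type*} (γ : List (Finset I)) (J J' : Finset I) : Prop :=
  γ.head? = some J ∧ γ.getLast? = some J'

/-- The subsupport of a path: the sequence of unions of consecutive entries. -/
def subSup {I : Type*} [DecidableEq I] (γ : List (Finset I)) : List (Finset I) :=
  List.zipWith (· ∪ ·) γ γ.tail

open Classical in
/-- `kappa B γ`: the number of entries of the subsupport of `γ` that belong to `B`. -/
noncomputable def kappa {I : Type*} [DecidableEq I] (B : Set (Finset I))
    (γ : List (Finset I)) : ℕ :=
  (subSup γ).countP fun J => decide (J ∈ B)

/-- `A` is `k`-connected in `H`: any two elements of `A` are joined by a `k`-path in `H`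
with support contained in `A`. -/
def KConnectedIn {I : Type*} [DecidableEq I] (H : Set (Finset I)) (k : ℕ)
    (A : Set (Finset I)) : Prop :=
  ∀ J ∈ A, ∀ J' ∈ A, ∃ γ : List (Finset I),
    IsKPath H k γ ∧ Joins γ J J' ∧ ∀ K ∈ γ, K ∈ A

/-- `C` is a `k`-connected component of `A` in `H`: a maximal nonempty `k`-connected
subset of `A`. -/
def IsKComponent {I : Type*} [DecidableEq I] (H : Set (Finset I)) (k : ℕ)
    (A C : Set (Finset I)) : Prop :=
  C.Nonempty ∧ C ⊆ A ∧ KConnectedIn H k C ∧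
    ∀ C' : Set (Finset I), C ⊆ C' → C' ⊆ A → KConnectedIn H k C' → C' = C

/-- `H` is 1-connected: `H(1)` is 1-connected in `H`. -/
def OneConnected {I : Type*} [DecidableEq I] (H : Set (Finset I)) : Prop :=
  KConnectedIn H 1 (level H 1)

/-- One-sided version of an elementary homotopic pair of 1-paths in `H`. -/
def ElemPairCore {I : Type*} [DecidableEq I] (H : Set (Finset I))
    (ε ε' : List (Finset I)) : Prop :=
  ε = ε'
  ∨ (∃ i₁ i₂ : I, ε = [{i₁}, {i₂}, {i₁}] ∧ ε' = [{i₁}])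
  ∨ (∃ i₁ i₂ i₃ : I, ε = [{i₁}, {i₂}] ∧ ε' = [{i₁}, {i₃}, {i₂}] ∧
      IsKPath H 2 [{i₁, i₃}, {i₃, i₂}])

/-- An elementary homotopic pair of 1-paths in `H` (up to swapping the two paths). -/
def ElemPair {I : Type*} [DecidableEq I] (H : Set (Finset I))
    (ε ε' : List (Finset I)) : Prop :=
  ElemPairCore H ε ε' ∨ ElemPairCore H ε' ε

/-- `γ₂` is obtained from `γ₁` by an elementary homotopy. -/
def ElemHomotopy {I : Type*} [DecidableEq I] (H : Set (Finset I))
    (γ₁ γ₂ : List (Finset I)) : Prop :=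
  ∃ δ ε₁ ε₂ ρ : List (Finset I),
    ElemPair H ε₁ ε₂ ∧ γ₁ = δ ++ ε₁ ++ ρ ∧ γ₂ = δ ++ ε₂ ++ ρ

/-- `γ` and `γ'` are homotopically equivalent in `H` with support in `A`: they are linked
by a finite chain of elementary homotopies in which every intermediate 1-path has
support in `A`. -/
def HomotopicIn {I : Type*} [DecidableEq I] (H A : Set (Finset I))
    (γ γ' : List (Finset I)) : Prop :=
  (IsKPath H 1 γ ∧ ∀ J ∈ γ, J ∈ A) ∧
    Relation.ReflTransGen
      (fun g₁ g₂ => ElemHomotopy H g₁ g₂ ∧ IsKPath H 1 g₂ ∧ ∀ J ∈ g₂, J ∈ A) γ γ'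

/-- A 1-connected subset `A ⊆ H(1)` is simply connected in `H`: any two 1-paths in `H`
with support in `A` joining the same strata are homotopically equivalent in `H` with
support in `A`. -/
def SimplyConnectedIn {I : Type*} [DecidableEq I] (H A : Set (Finset I)) : Prop :=
  KConnectedIn H 1 A ∧
    ∀ γ γ' : List (Finset I), IsKPath H 1 γ → IsKPath H 1 γ' →
      (∀ J ∈ γ, J ∈ A) → (∀ J ∈ γ', J ∈ A) →
      γ.head? = γ'.head? → γ.getLast? = γ'.getLast? →
      HomotopicIn H A γ γ'

/-- `H` is simply connected: `H(1)` is simply connected in `H`. -/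
def SimplyConnected {I : Type*} [DecidableEq I] (H : Set (Finset I)) : Prop :=
  SimplyConnectedIn H (level H 1)

/-- The closure of `A` in `H`: the strata of `H` containing some element of `A`. -/
def Cl {I : Type*} (H A : Set (Finset I)) : Set (Finset I) :=
  {J' ∈ H | ∃ J ∈ A, J ⊆ J'}

/-- A datum of nodal strata `(N, {P_J})` in `H`: a subset `N ⊆ H` together with, for each
`J ∈ N`, a partition `P_J = {J₊, J₋}` of `J` into two nonempty parts, such that for every
`J ∈ N` and `J' ⊆ J` one has `J' ∈ N` iff `J' ∩ J₊ ≠ ∅ ≠ J' ∩ J₋`, and in that case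
`P_{J'} = {J' ∩ J₊, J' ∩ J₋}`. -/
structure NodalDatum {I : Type*} [DecidableEq I] (H : Set (Finset I)) : Type _ where
  N : Set (Finset I)
  N_sub : N ⊆ H
  plus : Finset I → Finset I
  minus : Finset I → Finset I
  plus_nonempty : ∀ J ∈ N, (plus J).Nonempty
  minus_nonempty : ∀ J ∈ N, (minus J).Nonempty
  union_eq : ∀ J ∈ N, plus J ∪ minus J = J
  disj : ∀ J ∈ N, Disjoint (plus J) (minus J)
  mem_iff : ∀ J ∈ N, ∀ J' : Finset I, J' ⊆ J →
    (J' ∈ N ↔ (J' ∩ plus J).Nonempty ∧ (J' ∩ minus J).Nonempty)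
  part_eq : ∀ J ∈ N, ∀ J' : Finset I, J' ⊆ J → J' ∈ N →
    ({plus J', minus J'} : Set (Finset I)) = {J' ∩ plus J, J' ∩ minus J}

/-- `N*`: the set of uninterrupted nodal strata, i.e. `J ∈ N` with `Cl_H({J}) ⊆ N`. -/
def Nstar {I : Type*} [DecidableEq I] {H : Set (Finset I)} (D : NodalDatum H) :
    Set (Finset I) :=
  {J ∈ D.N | ∀ J' ∈ H, J ⊆ J' → J' ∈ D.N}

/-- A nodal block of `N` in `H`: a 2-connected component of `N(2) = N ∩ H(2)` in `H`. -/
def IsNodalBlock {I : Type*} [DecidableEq I] {H : Set (Finset I)} (D : NodalDatum H)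
    (B : Set (Finset I)) : Prop :=
  IsKComponent H 2 (D.N ∩ level H 2) B

/-- A nodal separating block: a nodal block contained in `N*`. -/
def IsSepBlock {I : Type*} [DecidableEq I] {H : Set (Finset I)} (D : NodalDatum H)
    (B : Set (Finset I)) : Prop :=
  IsNodalBlock D B ∧ B ⊆ Nstar D

/-- The separator set: the union of all nodal separating blocks. -/
def SepSet {I : Type*} [DecidableEq I] {H : Set (Finset I)} (D : NodalDatum H) :
    Set (Finset I) :=
  ⋃₀ {B | IsSepBlock D B}

/-- `A_B(i)`: the set of `{j} ∈ H(1)` joined to `{i}` by a 1-path `γ` in `H` with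
`κ_B(γ)` even. -/
def ABset {I : Type*} [DecidableEq I] (H B : Set (Finset I)) (i : I) : Set (Finset I) :=
  {J ∈ level H 1 | ∃ γ : List (Finset I),
    IsKPath H 1 γ ∧ Joins γ {i} J ∧ Even (kappa B γ)}

/-- `B_B(i)`: the set of `{j} ∈ H(1)` joined to `{i}` by a 1-path `γ` in `H` with
`κ_B(γ)` odd. -/
def BBset {I : Type*} [DecidableEq I] (H B : Set (Finset I)) (i : I) : Set (Finset I) :=
  {J ∈ level H 1 | ∃ γ : List (Finset I),
    IsKPath H 1 γ ∧ Joins γ {i} J ∧ Odd (kappa B γ)}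

/-!
Since `H` is simply connected, any two 1-paths with the same ends are linked by elementary
homotopies, so it suffices that each of them preserves the parity of `κ_B`. A backtrack
`({i₁}, {i₂}, {i₁})` crosses the edge `{i₁, i₂}` twice. Replacing `({i₁}, {i₂})` by
`({i₁}, {i₃}, {i₂})` changes `κ_B` by the number of edges of the triangle `T = {i₁, i₂, i₃}`
lying in `B`, and this number is even: if some edge of `T` lies in `B ⊆ N*` then `T ∈ N`, its
partition splits off a single apex `a`, the edges of `T` lying in `N` are the two through `a`,
and as they are adjacent through `T` the maximality of the block `B` puts both in `B`, while the
third edge is not even in `N`.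
-/

theorem Finset.inter_singleton_nonempty_and_inter_nonempty_iff {α : Type*} [DecidableEq α]
    {a : α} {P f : Finset α} (hf : f ⊆ {a} ∪ P) (hf2 : f.card = 2) :
    (f ∩ {a}).Nonempty ∧ (f ∩ P).Nonempty ↔ a ∈ f := by
  constructor
  · rintro ⟨⟨x, hx⟩, -⟩
    rw [mem_inter, mem_singleton] at hx
    exact hx.2 ▸ hx.1
  · intro ha
    obtain ⟨b, hbf, hba⟩ := f.exists_mem_ne (by omega) a
    have hbP : b ∈ P := (mem_union.mp (hf hbf)).resolve_left (mt mem_singleton.mp hba)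
    exact ⟨⟨a, mem_inter.mpr ⟨ha, mem_singleton_self a⟩⟩, ⟨b, mem_inter.mpr ⟨hbf, hbP⟩⟩⟩

theorem Finset.pairwise_ne_of_card_eq_three {α : Type*} [DecidableEq α] {x y z : α}
    (h : ({x, y, z} : Finset α).card = 3) : x ≠ y ∧ x ≠ z ∧ y ≠ z := by
  refine ⟨?_, ?_, ?_⟩ <;> rintro rfl <;> grind

theorem Joins.reverse {I : Type*} {γ : List (Finset I)} {J J' : Finset I} (h : Joins γ J J') :
    Joins γ.reverse J' J :=
  ⟨List.head?_reverse ▸ h.2, List.getLast?_reverse ▸ h.1⟩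

section Strata

variable {I : Type*} [DecidableEq I] {H : Set (Finset I)} {k : ℕ}

theorem IsKPath.reverse {γ : List (Finset I)} (h : IsKPath H k γ) : IsKPath H k γ.reverse := by
  obtain ⟨hne, hlev, hchain⟩ := h
  refine ⟨List.reverse_ne_nil_iff.mpr hne, fun J hJ => hlev J (List.mem_reverse.mp hJ), ?_⟩
  rw [List.Chain', List.isChain_reverse]
  exact hchain.imp fun J J' hJJ' => Finset.union_comm J J' ▸ hJJ'

theorem IsKPath.cons {γ : List (Finset I)} {J J₀ : Finset I} (h : IsKPath H k γ)
    (hJ : J ∈ level H k) (hhead : γ.head? = some J₀) (hJJ₀ : J ∪ J₀ ∈ level H (k + 1)) :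
    IsKPath H k (J :: γ) := by
  obtain ⟨-, hlev, hchain⟩ := h
  refine ⟨List.cons_ne_nil _ _, List.forall_mem_cons.mpr ⟨hJ, hlev⟩, ?_⟩
  rw [List.Chain', List.isChain_cons, hhead]
  exact ⟨fun J' hJ' => Option.some_injective _ hJ' ▸ hJJ₀, hchain⟩

theorem KConnectedIn.insert_of_union_mem {C : Set (Finset I)} {J₀ J : Finset I}
    (hC : KConnectedIn H k C) (hJ₀ : J₀ ∈ C) (hJ : J ∈ level H k)
    (hJJ₀ : J ∪ J₀ ∈ level H (k + 1)) : KConnectedIn H k (insert J C) := by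
  have from_new : ∀ K ∈ C, ∃ γ, IsKPath H k γ ∧ Joins γ J K ∧ ∀ X ∈ γ, X ∈ insert J C := by
    intro K hK
    obtain ⟨γ, hγ, hjoin, hsupp⟩ := hC J₀ hJ₀ K hK
    refine ⟨J :: γ, hγ.cons hJ hjoin.1 hJJ₀, ⟨rfl, ?_⟩, ?_⟩
    · rw [List.getLast?_cons, hjoin.2]; rfl
    · exact List.forall_mem_cons.mpr ⟨Set.mem_insert J C, fun X hX => Or.inr (hsupp X hX)⟩
  rintro K₁ (hK₁ | hK₁) K₂ (hK₂ | hK₂)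
  · rw [hK₁, hK₂]
    exact ⟨[J], ⟨List.cons_ne_nil _ _, by simpa using hJ, List.isChain_singleton _⟩,
      ⟨rfl, rfl⟩, by simp⟩
  · exact hK₁ ▸ from_new K₂ hK₂
  · rw [hK₂]
    obtain ⟨γ, hγ, hjoin, hsupp⟩ := from_new K₁ hK₁
    exact ⟨γ.reverse, hγ.reverse, hjoin.reverse, fun X hX => hsupp X (List.mem_reverse.mp hX)⟩
  · obtain ⟨γ, hγ, hjoin, hsupp⟩ := hC K₁ hK₁ K₂ hK₂
    exact ⟨γ, hγ, hjoin, fun X hX => Or.inr (hsupp X hX)⟩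

theorem IsKComponent.mem_of_union_mem {A C : Set (Finset I)} {J₀ J : Finset I}
    (hC : IsKComponent H k A C) (hJ₀ : J₀ ∈ C) (hJA : J ∈ A) (hJ : J ∈ level H k)
    (hJJ₀ : J ∪ J₀ ∈ level H (k + 1)) : J ∈ C := by
  obtain ⟨-, hCA, hconn, hmax⟩ := hC
  have := hmax (insert J C) (Set.subset_insert J C) (Set.insert_subset hJA hCA)
    (hconn.insert_of_union_mem hJ₀ hJ hJJ₀)
  exact this ▸ Set.mem_insert J C


theorem NodalDatum.exists_apex (D : NodalDatum H) {T : Finset I} (hT : T ∈ D.N)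
    (hT3 : T.card = 3) : ∃ a ∈ T, ∀ f ⊆ T, f.card = 2 → (f ∈ D.N ↔ a ∈ f) := by
  have of_part : ∀ S P : Finset I, S ∪ P = T → S.card = 1 →
      (∀ f ⊆ T, f ∈ D.N ↔ (f ∩ S).Nonempty ∧ (f ∩ P).Nonempty) →
      ∃ a ∈ T, ∀ f ⊆ T, f.card = 2 → (f ∈ D.N ↔ a ∈ f) := by
    intro S P hSP hS hN
    obtain ⟨a, rfl⟩ := Finset.card_eq_one.mp hS
    refine ⟨a, hSP ▸ Finset.mem_union_left P (Finset.mem_singleton_self a), fun f hfT hf2 => ?_⟩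
    exact (hN f hfT).trans
      (Finset.inter_singleton_nonempty_and_inter_nonempty_iff (hSP ▸ hfT) hf2)
  have hcard : (D.plus T).card + (D.minus T).card = 3 := by
    rw [← Finset.card_union_of_disjoint (D.disj T hT), D.union_eq T hT, hT3]
  have hplus := (D.plus_nonempty T hT).card_pos
  have hminus := (D.minus_nonempty T hT).card_pos
  rcases (by omega : (D.plus T).card = 1 ∨ (D.minus T).card = 1) with h | h
  · exact of_part _ _ (D.union_eq T hT) h (D.mem_iff T hT)
  · exact of_part _ _ (Finset.union_comm (D.plus T) _ ▸ D.union_eq T hT) h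
      fun f hf => (D.mem_iff T hT f hf).trans and_comm

theorem IsSepBlock.exists_apex (hH : IsCSS H) {D : NodalDatum H} {B : Set (Finset I)}
    (hB : IsSepBlock D B) {T e : Finset I} (hT : T ∈ level H 3) (heT : e ⊆ T) (he : e ∈ B) :
    ∃ a ∈ T, ∀ f ⊆ T, f.card = 2 → (f ∈ B ↔ a ∈ f) := by
  obtain ⟨hblock, hBstar⟩ := hB
  have hBN := hblock.2.1
  obtain ⟨a, haT, hapex⟩ := D.exists_apex ((hBstar he).2 T hT.1 heT) hT.2
  refine ⟨a, haT, fun f hfT hf2 => (?_ : f ∈ B ↔ f ∈ D.N).trans (hapex f hfT hf2)⟩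
  refine ⟨fun hf => (hBN hf).1, fun hfN => ?_⟩
  have hf : f ∈ level H 2 := ⟨hH.1 T hT.1 f hfT, hf2⟩
  by_cases hfe : f = e
  · exact hfe ▸ he
  have hfe_T : f ∪ e = T := by
    refine Finset.eq_of_subset_of_card_le (Finset.union_subset hfT heT) ?_
    have hne : f ≠ f ∪ e := fun h => hfe (Finset.eq_of_subset_of_card_le
      (h ▸ Finset.subset_union_right) (by rw [(hBN he).2.2, hf2])).symm
    have := Finset.card_lt_card (Finset.subset_union_left.ssubset_of_ne hne)
    have hT3 : T.card = 3 := hT.2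
    omega
  exact hblock.mem_of_union_mem he ⟨hfN, hf⟩ hf (hfe_T ▸ hT)


theorem IsSepBlock.mem_iff_xor (hH : IsCSS H) {D : NodalDatum H} {B : Set (Finset I)}
    (hB : IsSepBlock D B) {x y z : I} (hT : ({x, y, z} : Finset I) ∈ level H 3) :
    ({x, z} : Finset I) ∈ B ↔ Xor (({x, y} : Finset I) ∈ B) (({y, z} : Finset I) ∈ B) := by
  obtain ⟨hxy, hxz, hyz⟩ := Finset.pairwise_ne_of_card_eq_three hT.2
  have of_apex : (∃ e ⊆ ({x, y, z} : Finset I), e ∈ B) →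
      (({x, z} : Finset I) ∈ B ↔ Xor (({x, y} : Finset I) ∈ B) (({y, z} : Finset I) ∈ B)) := by
    rintro ⟨e, heT, he⟩
    obtain ⟨a, haT, hapex⟩ := hB.exists_apex hH hT heT he
    rw [hapex {x, z} (by intro t; simp; tauto) (Finset.card_pair hxz),
      hapex {x, y} (by intro t; simp; tauto) (Finset.card_pair hxy),
      hapex {y, z} (by intro t; simp; tauto) (Finset.card_pair hyz)]
    simp only [Finset.mem_insert, Finset.mem_singleton] at haT
    rcases haT with rfl | rfl | rfl <;> simp [hxy, hxz, hyz, hxy.symm, hxz.symm, hyz.symm]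
  by_cases hxyB : ({x, y} : Finset I) ∈ B
  · exact of_apex ⟨_, by intro t; simp; tauto, hxyB⟩
  by_cases hyzB : ({y, z} : Finset I) ∈ B
  · exact of_apex ⟨_, by intro t; simp; tauto, hyzB⟩
  by_cases hxzB : ({x, z} : Finset I) ∈ B
  · exact of_apex ⟨_, by intro t; simp; tauto, hxzB⟩
  simp [hxyB, hyzB, hxzB]


theorem subSup_append_cons (xs : List (Finset I)) (x : Finset I) (ys : List (Finset I)) :
    subSup (xs ++ x :: ys) = subSup (xs ++ [x]) ++ subSup (x :: ys) := by
  induction xs with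
  | nil => rfl
  | cons a xs ih =>
    cases xs with
    | nil => rfl
    | cons b xs => exact congrArg ((a ∪ b) :: ·) ih

theorem kappa_append_cons (B : Set (Finset I)) (xs : List (Finset I)) (x : Finset I)
    (ys : List (Finset I)) :
    kappa B (xs ++ x :: ys) = kappa B (xs ++ [x]) + kappa B (x :: ys) := by
  rw [kappa, subSup_append_cons, List.countP_append, kappa, kappa]

theorem kappa_singleton (B : Set (Finset I)) (a : Finset I) : kappa B [a] = 0 := rfl

open Classical in
theorem kappa_cons_cons (B : Set (Finset I)) (a b : Finset I) (l : List (Finset I)) :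
    kappa B (a :: b :: l) = kappa B (b :: l) + if a ∪ b ∈ B then 1 else 0 := by
  simp only [kappa, subSup, List.tail_cons, List.zipWith_cons_cons, List.countP_cons,
    decide_eq_true_eq]

theorem kappa_append_append (B : Set (Finset I)) (δ ρ : List (Finset I))
    {ε : List (Finset I)} {a L : Finset I} (ha : ε.head? = some a) (hL : ε.getLast? = some L) :
    kappa B (δ ++ ε ++ ρ) = kappa B (δ ++ [a]) + kappa B ε + kappa B (L :: ρ) := by
  obtain ⟨ε', rfl⟩ := List.head?_eq_some_iff.mp ha
  obtain ⟨ε'', hε''⟩ := List.getLast?_eq_some_iff.mp hL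
  rw [List.append_assoc, List.cons_append, kappa_append_cons B δ a, ← List.cons_append, hε'',
    List.append_assoc, List.singleton_append, kappa_append_cons B ε'' L ρ, add_assoc]


theorem IsKPath.pair_union_mem_level_three {i₁ i₂ i₃ : I}
    (h : IsKPath H 2 [{i₁, i₃}, {i₃, i₂}]) : ({i₁, i₃, i₂} : Finset I) ∈ level H 3 := by
  have hunion : ({i₁, i₃} : Finset I) ∪ {i₃, i₂} = {i₁, i₃, i₂} := by grind
  have hchain := h.2.2
  rw [List.Chain', List.isChain_pair, hunion] at hchain
  exact hchain

theorem kappa_modEq_of_elemPairCore (hH : IsCSS H) {D : NodalDatum H} {B : Set (Finset I)}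
    (hB : IsSepBlock D B) {ε₁ ε₂ : List (Finset I)} (h : ElemPairCore H ε₁ ε₂)
    (δ ρ : List (Finset I)) : kappa B (δ ++ ε₁ ++ ρ) ≡ kappa B (δ ++ ε₂ ++ ρ) [MOD 2] := by
  rcases h with rfl | ⟨i₁, i₂, rfl, rfl⟩ | ⟨i₁, i₂, i₃, rfl, rfl, hpath⟩
  · rfl
  · rw [kappa_append_append B δ ρ rfl rfl, kappa_append_append B δ ρ (ε := [{i₁}]) rfl rfl]
    refine Nat.ModEq.add_right _ (Nat.ModEq.add_left _ ?_)
    rw [kappa_cons_cons, kappa_cons_cons, kappa_singleton, Finset.union_comm {i₂}]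
    split_ifs <;> decide
  · rw [kappa_append_append B δ ρ rfl rfl, kappa_append_append B δ ρ (ε := [{i₁}, {i₃}, {i₂}])
      rfl rfl]
    refine Nat.ModEq.add_right _ (Nat.ModEq.add_left _ ?_)
    have hxor := hB.mem_iff_xor hH hpath.pair_union_mem_level_three
    simp only [kappa_cons_cons, kappa_singleton, ← Finset.insert_eq]
    by_cases h13 : ({i₁, i₃} : Finset I) ∈ B <;> by_cases h32 : ({i₃, i₂} : Finset I) ∈ B <;>
      simp_all <;> decide

theorem kappa_modEq_of_elemHomotopy (hH : IsCSS H) {D : NodalDatum H} {B : Set (Finset I)}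
    (hB : IsSepBlock D B) {γ₁ γ₂ : List (Finset I)} (h : ElemHomotopy H γ₁ γ₂) :
    kappa B γ₁ ≡ kappa B γ₂ [MOD 2] := by
  obtain ⟨δ, ε₁, ε₂, ρ, hpair | hpair, rfl, rfl⟩ := h
  · exact kappa_modEq_of_elemPairCore hH hB hpair δ ρ
  · exact (kappa_modEq_of_elemPairCore hH hB hpair δ ρ).symm

theorem kappa_modEq_of_homotopicIn (hH : IsCSS H) {D : NodalDatum H} {B : Set (Finset I)}
    (hB : IsSepBlock D B) {A : Set (Finset I)} {γ γ' : List (Finset I)}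
    (h : HomotopicIn H A γ γ') : kappa B γ ≡ kappa B γ' [MOD 2] := by
  obtain ⟨-, hrel⟩ := h
  induction hrel with
  | refl => rfl
  | tail _ step ih => exact ih.trans (kappa_modEq_of_elemHomotopy hH hB step.1)

end Strata

theorem parity_of_crossings_general
    {I : Type*} [DecidableEq I] (H : Set (Finset I))
    (hH : IsCSS H) (hsc : SimplyConnected H)
    (D : NodalDatum H) (B : Set (Finset I)) (hB : IsSepBlock D B) :
    (∀ (i j : I) (γ γ' : List (Finset I)),
        IsKPath H 1 γ → IsKPath H 1 γ' →
        Joins γ ({i} : Finset I) ({j} : Finset I) →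
        Joins γ' ({i} : Finset I) ({j} : Finset I) →
        Even ((kappa B γ : ℤ) - (kappa B γ' : ℤ))) ∧
    ∀ i : I, ABset H B i ∩ BBset H B i = ∅ := by
  have parity : ∀ γ γ' : List (Finset I), IsKPath H 1 γ → IsKPath H 1 γ' →
      γ.head? = γ'.head? → γ.getLast? = γ'.getLast? →
      (Even (kappa B γ) ↔ Even (kappa B γ')) := by
    intro γ γ' hγ hγ' hhead hlast
    have hmod := kappa_modEq_of_homotopicIn hH hB
      (hsc.2 γ γ' hγ hγ' hγ.2.1 hγ'.2.1 hhead hlast)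
    rw [Nat.even_iff, Nat.even_iff, hmod]
  refine ⟨fun i j γ γ' hγ hγ' hj hj' => ?_, fun i => Set.eq_empty_of_forall_notMem ?_⟩
  · rw [Int.even_sub, Int.even_coe_nat, Int.even_coe_nat]
    exact parity γ γ' hγ hγ' (hj.1.trans hj'.1.symm) (hj.2.trans hj'.2.symm)
  · rintro J ⟨⟨-, γ, hγ, hj, heven⟩, ⟨-, γ', hγ', hj', hodd⟩⟩
    have := (parity γ γ' hγ hγ' (hj.1.trans hj'.1.symm) (hj.2.trans hj'.2.symm)).mp heven
    exact Nat.not_even_iff_odd.mpr hodd this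

/-- In a simply connected combinatorial strata structure, for a nodal
separating block `B`, any two 1-paths joining the same strata `{i}` and `{j}` cross `B`
a number of times of the same parity; in particular `A_B(i) ∩ B_B(i) = ∅` for all `i`. -/
theorem parity_of_crossings
    {I : Type*} [Fintype I] [DecidableEq I] (H : Set (Finset I))
    (hH : IsCSS H) (hsc : SimplyConnected H)
    (D : NodalDatum H) (B : Set (Finset I)) (hB : IsSepBlock D B) :
    (∀ (i j : I) (γ γ' : List (Finset I)),
        IsKPath H 1 γ → IsKPath H 1 γ' →
        Joins γ ({i} : Finset I) ({j} : Finset I) →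
        Joins γ' ({i} : Finset I) ({j} : Finset I) →
        Even ((kappa B γ : ℤ) - (kappa B γ' : ℤ))) ∧
    ∀ i : I, ABset H B i ∩ BBset H B i = ∅ :=
  parity_of_crossings_general H hH hsc D B hB
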